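/- Let char(𝔽_q) > d with d ≥ 2, let F ∈ 𝔽_q[x_1, …, x_n] be a nonsingular homogeneous form of degree d with symmetric coefficients, let e ≥ 1, m ≥ 0, and set m_0 = ⌈(m+1)/(d−1)⌉. Let J ≥ 0 and let l be a nonnegative integer with l ≤ 1 + J/(d−1) and l ≤ e + 1, and set r = e + 1 − l. If α ∈ 𝕋^{(m)} does not lie in the major arcs 𝔐(J), then every tuple (x^{(1)}, …, x^{(d−1)}) ∈ 𝒪_m^{n(d−1)} counted by M_m(α, e+1, r) satisfies ψ_i(x^{(1)}, …, x^{(d−1)}) = 0 in (𝔽_q[s]/(s^{m+1}))[t] for all 1 ≤ i ≤ n; consequently M_m(α, e+1, r) ≤ #{(x^{(1)}, …, x^{(d−1)}) ∈ 𝒪_m^{n(d−1)} : |x^{(j)}|_m ≤ q^{e−r} for all j, and ψ_i(x^{(1)}, …, x^{(d−1)}) = 0 for all 1 ≤ i ≤ n}. -/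

import Mathlib

open Polynomial MeasureTheory
open scoped Classical

noncomputable section

/-- `R[s]/(s^{m+1})`: we realise it as `AdjoinRoot (X^(m+1))`, whose root is `s`. -/
abbrev Amod (R : Type) [CommRing R] (m : ℕ) : Type :=
  AdjoinRoot ((X : Polynomial R) ^ (m + 1))

/-- `K_∞^{(m)} = K_∞[s]/(s^{m+1})`, modelled as formal Laurent series in `u = t⁻¹`
with coefficients in `F_q[s]/(s^{m+1})`. -/
abbrev Km (R : Type) [CommRing R] (m : ℕ) : Type := LaurentSeries (Amod R m)

namespace CircleMethod

/-- the canonical representative of degree `≤ m` of an element of `R[s]/(s^{m+1})` -/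
def repA (R : Type) [CommRing R] (m : ℕ) (c : Amod R m) : Polynomial R :=
  AdjoinRoot.modByMonicHom (monic_X_pow (m + 1)) c

/-- the `j`-th `s`-coefficient of an element of `R[s]/(s^{m+1})` -/
def coeffA (R : Type) [CommRing R] (m : ℕ) (c : Amod R m) (j : ℕ) : R :=
  (repA R m c).coeff j

/-- the sum of the `s`-coefficients of an element of `R[s]/(s^{m+1})` -/
def sumCoeffA (R : Type) [CommRing R] (m : ℕ) (c : Amod R m) : R :=
  (repA R m c).eval 1

/-- reduction modulo `s` -/
def redA (R : Type) [CommRing R] (m : ℕ) : Amod R m →+* R :=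
  AdjoinRoot.lift (RingHom.id R) 0 (by simp)

/-- the embedding of `O_m = (R[s]/(s^{m+1}))[t]` into `K_∞^{(m)}`; here `t = u⁻¹`. -/
def OtoK (R : Type) [CommRing R] (m : ℕ) (x : Polynomial (Amod R m)) : Km R m :=
  ∑ k ∈ Finset.range (x.natDegree + 1), HahnSeries.single (-(k : ℤ)) (x.coeff k)

variable {R : Type} [CommRing R] {m : ℕ}

/-- `|α|_m < q^z` -/
def absLt (α : Km R m) (z : ℤ) : Prop := ∀ j : ℤ, j ≤ -z → α.coeff j = 0

/-- `‖α‖_m < q^z` -/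
def fracLt (α : Km R m) (z : ℤ) : Prop := ∀ j : ℤ, 1 ≤ j → j ≤ -z → α.coeff j = 0

/-- `‖α₀‖_0 < q^z`, where `α₀` is the reduction of `α` modulo `s` -/
def fracLtRed (α : Km R m) (z : ℤ) : Prop :=
  ∀ j : ℤ, 1 ≤ j → j ≤ -z → redA R m (α.coeff j) = 0

/-- `|α₀|_0 < q^z`, where `α₀` is the reduction of `α` modulo `s` -/
def absLtRed (α : Km R m) (z : ℤ) : Prop :=
  ∀ j : ℤ, j ≤ -z → redA R m (α.coeff j) = 0

/-- `|x|_m < q^z`, i.e. `deg_t x < z`, for an element of `O_m` -/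
def polyDegLt {S : Type} [Semiring S] (x : Polynomial S) (z : ℤ) : Prop :=
  ∀ k : ℕ, z ≤ (k : ℤ) → x.coeff k = 0

variable (Fq : Type) [Field Fq] [Fintype Fq]

/-- the additive character `e_q(x) = exp(2πi Tr_{F_q/F_p}(x)/p)` -/
def eChar (x : Fq) : ℂ :=
  letI : CharP Fq (ringChar Fq) := ringChar.charP Fq
  letI := ZMod.algebra Fq (ringChar Fq)
  Complex.exp (2 * Real.pi * Complex.I *
    ((Algebra.trace (ZMod (ringChar Fq)) Fq x).val : ℂ) / (ringChar Fq : ℂ))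

/-- the additive character `ψ_m` of `K_∞^{(m)}` -/
def psiM (m : ℕ) (α : Km Fq m) : ℂ := eChar Fq (sumCoeffA Fq m (α.coeff 1))

/-- the form `F(x) = Σ c_{i₁…i_d} x_{i₁} ⋯ x_{i_d}` attached to a coefficient tensor -/
def formOf (K : Type) [CommRing K] (d n : ℕ) (c : (Fin d → Fin n) → K) :
    MvPolynomial (Fin n) K :=
  ∑ idx : Fin d → Fin n, MvPolynomial.C (c idx) * ∏ k, MvPolynomial.X (idx k)

/-- symmetry of a coefficient tensor -/
def SymmetricCoeffs (K : Type) [CommRing K] (d n : ℕ) (c : (Fin d → Fin n) → K) : Prop :=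
  ∀ (σ : Equiv.Perm (Fin d)) (idx : Fin d → Fin n), c (idx ∘ σ) = c idx

/-- a form is nonsingular if its partial derivatives have no common zero other than `0`
over an algebraic closure -/
def Nonsingular (K : Type) [Field K] {n : ℕ} (F : MvPolynomial (Fin n) K) : Prop :=
  ∀ x : Fin n → AlgebraicClosure K,
    (∀ i, MvPolynomial.aeval x (MvPolynomial.pderiv i F) = 0) → x = 0

/-- extend an index tuple `(i₁, …, i_{d-1})` by a last entry `i` -/
def extIdx {d n : ℕ} (idx : Fin (d - 1) → Fin n) (i : Fin n) : Fin d → Fin n :=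
  fun k => if h : (k : ℕ) < d - 1 then idx ⟨k, h⟩ else i

/-- the multilinear forms `ψ_i(x⁽¹⁾, …, x⁽ᵈ⁻¹⁾) = d! Σ c_{i₁…i_{d-1} i} x⁽¹⁾_{i₁} ⋯` -/
def psiForm (K : Type) [CommRing K] (d n : ℕ) (c : (Fin d → Fin n) → K)
    (S : Type) [CommRing S] [Algebra K S] (i : Fin n)
    (x : Fin (d - 1) → Fin n → S) : S :=
  (Nat.factorial d : S) *
    ∑ idx : Fin (d - 1) → Fin n,
      algebraMap K S (c (extIdx idx i)) * ∏ k, x k (idx k)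

/-- the exponential sum `S(α)` -/
def Ssum (m e n : ℕ) (F : MvPolynomial (Fin n) Fq) (α : Km Fq m) : ℂ :=
  ∑ᶠ x ∈ {x : Fin n → Polynomial (Amod Fq m) | ∀ i, polyDegLt (x i) ((e : ℤ) + 1)},
    psiM Fq m (α * OtoK Fq m (MvPolynomial.aeval x F))

/-- the counting function `N_m(e)` -/
def Ncount (m e n : ℕ) (F : MvPolynomial (Fin n) Fq) : ℕ :=
  Nat.card {x : Fin n → Polynomial (Amod Fq m) //
    (∀ i, polyDegLt (x i) ((e : ℤ) + 1)) ∧ MvPolynomial.aeval x F = 0}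

/-- the counting function `M_m(α, r₁, r₂)` -/
def Mcount (d n m : ℕ) (c : (Fin d → Fin n) → Fq) (α : Km Fq m) (r1 r2 : ℕ) : ℕ :=
  Nat.card {x : Fin (d - 1) → Fin n → Polynomial (Amod Fq m) //
    (∀ j i, polyDegLt (x j i) ((r1 : ℤ) - (r2 : ℤ))) ∧
    (∀ i, fracLt (α * OtoK Fq m (psiForm Fq d n c (Polynomial (Amod Fq m)) i x))
      (-(r1 : ℤ) - ((d : ℤ) - 1) * (r2 : ℤ)))}

/-- the counting function `K_m(a, b)` of the shrinking lemma -/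
def Kcount (m n : ℕ) (lam : Fin n → Fin n → Km Fq m) (a b : ℤ) : ℕ :=
  Nat.card {x : Fin n → Polynomial (Amod Fq m) //
    (∀ j, polyDegLt (x j) a) ∧
    (∀ i, fracLt (∑ j, lam i j * OtoK Fq m (x j)) (-b))}

/-- the major arcs `𝔐(J)` -/
def majorArcs (m d e : ℕ) (J : ℤ) : Set (Km Fq m) :=
  {α | absLt α 0 ∧ ∃ r : Polynomial Fq, r.Monic ∧ (r.natDegree : ℤ) ≤ J ∧
    fracLtRed (OtoK Fq m (r.map (algebraMap Fq (Amod Fq m))) * α)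
      (J - (d : ℤ) * (e : ℤ) - 1)}

instance (m : ℕ) : Finite (Amod Fq m) := by
  have h : ((X : Polynomial Fq) ^ (m + 1)) ≠ 0 := pow_ne_zero _ X_ne_zero
  have : Module.Finite Fq (Amod Fq m) := (AdjoinRoot.powerBasis h).finite
  exact Module.finite_of_finite Fq

instance (m : ℕ) : TopologicalSpace (Amod Fq m) := ⊥

instance (m : ℕ) : DiscreteTopology (Amod Fq m) := ⟨rfl⟩

instance (m : ℕ) : IsTopologicalAddGroup (Amod Fq m) where
  continuous_add := continuous_of_discreteTopology
  continuous_neg := continuous_of_discreteTopology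

instance (m : ℕ) : MeasurableSpace (ℕ → Amod Fq m) := borel _

instance (m : ℕ) : BorelSpace (ℕ → Amod Fq m) := ⟨rfl⟩

/-- the parametrisation of the unit torus `𝕋^{(m)}` by sequences of coefficients -/
def torusMap (m : ℕ) (f : ℕ → Amod Fq m) : Km Fq m :=
  HahnSeries.single (1 : ℤ) (1 : Amod Fq m) *
    HahnSeries.ofPowerSeries ℤ (Amod Fq m) (PowerSeries.mk f)

instance (m : ℕ) : MeasurableSpace (Km Fq m) :=
  MeasurableSpace.map (torusMap Fq m) inferInstance

/-- the unit torus as a positive compact set -/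
def unitCube (m : ℕ) : TopologicalSpace.PositiveCompacts (ℕ → Amod Fq m) :=
  ⟨⟨Set.univ, isCompact_univ⟩, by rw [interior_univ]; exact Set.univ_nonempty⟩

/-- The Haar measure on `K_∞^{(m)}`, normalised so that the unit torus `𝕋^{(m)}`
has measure `1`.  (All sets whose measure we consider are contained in `𝕋^{(m)}`.) -/
def muKm (m : ℕ) : Measure (Km Fq m) :=
  (Measure.addHaarMeasure (unitCube Fq m)).map (torusMap Fq m)

end CircleMethod

/-!
If some `ψ_i(x)` were nonzero, write it as `s^k φ` with `k ≤ m` maximal, so that the reduction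
`g` of `φ` modulo `s` is a nonzero polynomial over `F_q`.  For `k ≤ m`, `s^k c = 0` forces
`c ≡ 0 mod s`; hence `deg g ≤ deg ψ_i(x) ≤ (d-1)(l-1) ≤ J`, and the bound on `‖α ψ_i(x)‖_m`
gives `‖g α₀‖_0 < q^{J-de-1}`.  So `g`, made monic, puts `α` in `𝔐(J)`.
-/

namespace CircleMethod

section DegreeBounds

variable {S : Type} [Semiring S]

theorem polyDegLt.mono {p : S[X]} {a b : ℤ} (hp : polyDegLt p a) (hab : a ≤ b) :
    polyDegLt p b :=
  fun k hk => hp k (hab.trans hk)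

theorem polyDegLt_C (c : S) : polyDegLt (C c) 1 :=
  fun k hk => by rw [coeff_C, if_neg (by omega)]

theorem polyDegLt_sum {ι : Type} (s : Finset ι) (f : ι → S[X]) {a : ℤ}
    (h : ∀ i ∈ s, polyDegLt (f i) a) : polyDegLt (∑ i ∈ s, f i) a :=
  fun k hk => by rw [finsetSum_coeff]; exact Finset.sum_eq_zero fun i hi => h i hi k hk

theorem polyDegLt.mul {p q : S[X]} {a b : ℤ} (hp : polyDegLt p a) (hq : polyDegLt q b) :
    polyDegLt (p * q) (a + b - 1) := fun k hk => by
  rw [coeff_mul]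
  refine Finset.sum_eq_zero fun ij hij => ?_
  rw [Finset.HasAntidiagonal.mem_antidiagonal] at hij
  by_cases hi : a ≤ (ij.1 : ℤ)
  · rw [hp _ hi, zero_mul]
  · rw [hq _ (by omega), mul_zero]

theorem polyDegLt.natDegree_lt {p : S[X]} {z : ℤ} (hp : polyDegLt p z) (h0 : p ≠ 0) :
    (p.natDegree : ℤ) < z := by
  by_contra h
  exact h0 (leadingCoeff_eq_zero.1 (hp _ (not_lt.1 h)))

theorem finite_setOf_forall_polyDegLt {ι κ : Type} [Finite S] [Finite ι] [Finite κ] (z : ℤ) :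
    {x : ι → κ → S[X] | ∀ j i, polyDegLt (x j i) z}.Finite :=
  Set.finite_coe_iff.1 <| Finite.of_injective
    (fun x (j : ι) (i : κ) (k : Fin z.toNat) => (x.1 j i).coeff k)
    fun x y hxy => Subtype.ext <| funext₂ fun j i => Polynomial.ext fun k => by
      by_cases hk : k < z.toNat
      · exact congrFun (congrFun (congrFun hxy j) i) ⟨k, hk⟩
      · rw [x.2 j i k (by omega), y.2 j i k (by omega)]

end DegreeBounds

theorem polyDegLt_prod {S ι : Type} [CommSemiring S] (s : Finset ι) (f : ι → S[X]) {a : ℤ}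
    (h : ∀ i ∈ s, polyDegLt (f i) a) : polyDegLt (∏ i ∈ s, f i) (s.card * (a - 1) + 1) := by
  classical
  induction s using Finset.induction_on with
  | empty => simpa using polyDegLt_C (1 : S)
  | insert i s hi ih =>
    rw [Finset.prod_insert hi, Finset.card_insert_of_notMem hi]
    refine ((h i (Finset.mem_insert_self i s)).mul
      (ih fun j hj => h j (Finset.mem_insert_of_mem hj))).mono (le_of_eq ?_)
    push_cast
    ring

theorem polyDegLt_psiForm {K T : Type} [CommRing K] [CommRing T] [Algebra K T] {d n : ℕ}
    (c : (Fin d → Fin n) → K) (i : Fin n) {x : Fin (d - 1) → Fin n → T[X]} {a : ℤ}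
    (hx : ∀ j i, polyDegLt (x j i) a) :
    polyDegLt (psiForm K d n c T[X] i x) ((d - 1 : ℕ) * (a - 1) + 1) := by
  have hsum := polyDegLt_sum Finset.univ _ fun idx _ =>
    (polyDegLt_C (algebraMap K T (c (extIdx idx i)))).mul
      (polyDegLt_prod Finset.univ (fun k => x k (idx k)) fun k _ => hx k (idx k))
  have h := (polyDegLt_C (d.factorial : T)).mul hsum
  rw [Finset.card_univ, Fintype.card_fin] at h
  convert h using 1
  · simp [psiForm, Polynomial.algebraMap_apply]
  · ring

section Truncated

variable {R : Type} [CommRing R] {m : ℕ}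

local notation "s" => AdjoinRoot.root ((X : R[X]) ^ (m + 1))

theorem fracLt.mono {α : Km R m} {a b : ℤ} (h : fracLt α a) (hab : a ≤ b) : fracLt α b :=
  fun j hj1 hj2 => h j hj1 (by omega)

theorem redA_mk (p : R[X]) : redA R m (AdjoinRoot.mk _ p) = p.coeff 0 := by
  rw [redA, AdjoinRoot.lift_mk, eval₂_at_zero, RingHom.id_apply]

theorem redA_comp_algebraMap : (redA R m).comp (algebraMap R (Amod R m)) = RingHom.id R :=
  RingHom.ext fun a => by simp [redA]

theorem root_dvd_of_redA_eq_zero {c : Amod R m} (h : redA R m c = 0) : s ∣ c := by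
  obtain ⟨p, rfl⟩ := AdjoinRoot.mk_surjective c
  obtain ⟨q, rfl⟩ := X_dvd_iff.2 (by rwa [redA_mk] at h)
  exact ⟨AdjoinRoot.mk _ q, by rw [map_mul, AdjoinRoot.mk_X]⟩

theorem redA_eq_zero_of_root_pow_mul_eq_zero {k : ℕ} (hk : k ≤ m) {c : Amod R m}
    (h : s ^ k * c = 0) : redA R m c = 0 := by
  obtain ⟨p, rfl⟩ := AdjoinRoot.mk_surjective c
  rw [← AdjoinRoot.mk_X, ← map_pow, ← map_mul, AdjoinRoot.mk_eq_zero] at h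
  obtain ⟨q, hq⟩ := h
  have hk' := congrArg (coeff · k) hq
  simp only [coeff_X_pow_mul', le_refl, if_true, Nat.sub_self] at hk'
  rw [redA_mk, hk', if_neg (by omega)]

theorem exists_eq_C_root_pow_mul {ψ : (Amod R m)[X]} (hψ : ψ ≠ 0) :
    ∃ k ≤ m, ∃ φ : (Amod R m)[X], ψ = C (s ^ k) * φ ∧ φ.map (redA R m) ≠ 0 := by
  classical
  set k := Nat.findGreatest (fun k => C (s ^ k) ∣ ψ) m with hk
  obtain ⟨φ, hφ⟩ : C (s ^ k) ∣ ψ :=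
    Nat.findGreatest_spec (P := fun k => C (s ^ k) ∣ ψ) (Nat.zero_le m) (by simp)
  refine ⟨k, Nat.findGreatest_le m, φ, hφ, fun h0 => ?_⟩
  have hsφ : C s ∣ φ := (C_dvd_iff_dvd_coeff _ _).2 fun i =>
    root_dvd_of_redA_eq_zero (by simpa using congrArg (coeff · i) h0)
  have hdvd : C (s ^ (k + 1)) ∣ ψ := by
    rw [hφ, pow_succ s k, C_mul]
    exact mul_dvd_mul_left _ hsφ
  rcases (Nat.findGreatest_le (P := fun k => C (s ^ k) ∣ ψ) m).lt_or_eq with hlt | heq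
  · exact Nat.findGreatest_is_greatest (Nat.lt_succ_self k) hlt hdvd
  · rw [← hk] at heq
    rw [heq, ← AdjoinRoot.mk_X, ← map_pow, AdjoinRoot.mk_self, C_0, zero_dvd_iff] at hdvd
    exact hψ hdvd

theorem coeff_OtoK (p : (Amod R m)[X]) (j : ℤ) :
    (OtoK R m p).coeff j = if j ≤ 0 then p.coeff (-j).toNat else 0 := by
  rw [OtoK, HahnSeries.coeff_sum]
  simp_rw [HahnSeries.coeff_single]
  split_ifs with hj
  · rw [Finset.sum_eq_single (-j).toNat, if_pos (by omega)]
    · intro b _ hb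
      rw [if_neg (by omega)]
    · intro hn
      rw [Finset.mem_range, not_lt] at hn
      rw [if_pos (by omega), coeff_eq_zero_of_natDegree_lt (by omega)]
  · exact Finset.sum_eq_zero fun b _ => by rw [if_neg (by omega)]

theorem OtoK_C_mul (a : Amod R m) (p : (Amod R m)[X]) :
    OtoK R m (C a * p) = HahnSeries.single 0 a * OtoK R m p := by
  ext j
  rw [HahnSeries.coeff_single_zero_mul, coeff_OtoK, coeff_OtoK]
  split_ifs <;> simp [coeff_C_mul]

theorem redA_coeff_OtoK (p : (Amod R m)[X]) (j : ℤ) :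
    redA R m ((OtoK R m p).coeff j) =
      if j ≤ 0 then (p.map (redA R m)).coeff (-j).toNat else 0 := by
  rw [coeff_OtoK]
  split_ifs <;> simp [coeff_map]

theorem redA_coeff_mul (β γ : Km R m) (j : ℤ) :
    redA R m ((β * γ).coeff j) = (β.map (redA R m) * γ.map (redA R m)).coeff j :=
  congrArg (HahnSeries.coeff · j) (HahnSeries.map_mul (redA R m).toNonUnitalRingHom)

end Truncated

theorem mem_majorArcs_of_fracLt {Fq : Type} [Field Fq] {m d e : ℕ} {J : ℤ}
    {α : Km Fq m} (hα : absLt α 0) {ψ : (Amod Fq m)[X]} (hψ : ψ ≠ 0)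
    (hdeg : polyDegLt ψ (J + 1)) (hfrac : fracLt (α * OtoK Fq m ψ) (J - d * e - 1)) :
    α ∈ majorArcs Fq m d e J := by
  obtain ⟨k, hkm, φ, rfl, hφ⟩ := exists_eq_C_root_pow_mul hψ
  set g := φ.map (redA Fq m)
  have hg : polyDegLt g (J + 1) := fun N hN => by
    rw [coeff_map]
    exact redA_eq_zero_of_root_pow_mul_eq_zero hkm (by rw [← coeff_C_mul]; exact hdeg N hN)
  have hgα : ∀ j : ℤ, 1 ≤ j → j ≤ -(J - d * e - 1) →
      (α.map (redA Fq m) * (OtoK Fq m φ).map (redA Fq m)).coeff j = 0 := fun j hj1 hj2 => by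
    rw [← redA_coeff_mul]
    refine redA_eq_zero_of_root_pow_mul_eq_zero hkm ?_
    have := hfrac j hj1 hj2
    rwa [OtoK_C_mul, mul_left_comm, HahnSeries.coeff_single_zero_mul] at this
  have hlc : g.leadingCoeff⁻¹ ≠ 0 := inv_ne_zero (leadingCoeff_ne_zero.2 hφ)
  refine ⟨hα, g * C g.leadingCoeff⁻¹, monic_mul_leadingCoeff_inv hφ, ?_, fun j hj1 hj2 => ?_⟩
  · rw [natDegree_mul_C hlc]
    have := hg.natDegree_lt hφ
    omega
  · have hOtoK : (OtoK Fq m ((g * C g.leadingCoeff⁻¹).map (algebraMap Fq (Amod Fq m)))).map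
        (redA Fq m) = (OtoK Fq m φ).map (redA Fq m) * HahnSeries.single 0 g.leadingCoeff⁻¹ := by
      ext j
      rw [HahnSeries.coeff_mul_single_zero, HahnSeries.map_coeff, HahnSeries.map_coeff,
        redA_coeff_OtoK, redA_coeff_OtoK, map_map, redA_comp_algebraMap, map_id]
      split_ifs <;> simp [g]
    rw [redA_coeff_mul, hOtoK, mul_right_comm, mul_comm (HahnSeries.map _ _),
      HahnSeries.coeff_mul_single_zero, hgα j hj1 hj2, zero_mul]

end CircleMethod

open CircleMethod in
theorem stmt17_general (Fq : Type) [Field Fq] [Fintype Fq] (d n m e : ℕ) (hd : 2 ≤ d)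
    (cf : (Fin d → Fin n) → Fq)
    (J l : ℕ) (hl1 : (l : ℝ) ≤ 1 + (J : ℝ) / ((d : ℝ) - 1)) (hl2 : l ≤ e + 1)
    (α : Km Fq m) (hα : absLt α 0) (hmaj : α ∉ majorArcs Fq m d e (J : ℤ)) :
    (∀ x : Fin (d - 1) → Fin n → Polynomial (Amod Fq m),
      (∀ j i, polyDegLt (x j i) (((e + 1 : ℕ) : ℤ) - ((e + 1 - l : ℕ) : ℤ))) →
      (∀ i, fracLt (α * OtoK Fq m (psiForm Fq d n cf (Polynomial (Amod Fq m)) i x))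
        (-((e + 1 : ℕ) : ℤ) - ((d : ℤ) - 1) * ((e + 1 - l : ℕ) : ℤ))) →
      ∀ i, psiForm Fq d n cf (Polynomial (Amod Fq m)) i x = 0) ∧
    Mcount Fq d n m cf α (e + 1) (e + 1 - l) ≤
      Nat.card {x : Fin (d - 1) → Fin n → Polynomial (Amod Fq m) //
        (∀ j i, polyDegLt (x j i) ((e : ℤ) - ((e + 1 - l : ℕ) : ℤ) + 1)) ∧
        ∀ i, psiForm Fq d n cf (Polynomial (Amod Fq m)) i x = 0} := by
  have hr : ((e + 1 - l : ℕ) : ℤ) = e + 1 - l := by omega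
  have hJ : ((d : ℤ) - 1) * (l - 1) ≤ J := by
    have hd1 : (0 : ℝ) < d - 1 := by
      have : (2 : ℝ) ≤ d := by exact_mod_cast hd
      linarith
    have : ((d : ℝ) - 1) * (l - 1) ≤ J := by
      rw [← le_div_iff₀' hd1]
      linarith
    exact_mod_cast this
  refine (and_iff_left_of_imp fun hψ => ?_).2 fun x hx hfrac i => ?_
  · refine Nat.card_mono ((finite_setOf_forall_polyDegLt _).subset fun x hx => hx.1) ?_
    exact fun x hx => ⟨fun j i => (hx.1 j i).mono (by omega), hψ x hx.1 hx.2⟩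
  · by_contra hne
    refine hmaj (mem_majorArcs_of_fracLt hα hne ((polyDegLt_psiForm cf i hx).mono ?_)
      ((hfrac i).mono ?_))
    · rw [hr, show ((d - 1 : ℕ) : ℤ) = d - 1 by omega]
      push_cast
      linarith
    · rw [hr]
      push_cast
      linarith

open CircleMethod in
/-- Minor-arc vanishing: let `char(F_q) > d ≥ 2`, let `F` be nonsingular of degree `d`
with symmetric coefficients `cf`, let `e ≥ 1`, `m ≥ 0`, `J ≥ 0`, and let `l` be a
nonnegative integer with `l ≤ 1 + J/(d-1)` and `l ≤ e+1`; set `r = e + 1 - l`.  If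
`α ∈ 𝕋^{(m)} \ 𝔐(J)`, then every tuple counted by `M_m(α, e+1, r)` satisfies
`ψ_i(x⁽¹⁾, …, x⁽ᵈ⁻¹⁾) = 0` for all `i`; consequently `M_m(α, e+1, r)` is at most the
number of tuples with `|x⁽ʲ⁾|_m ≤ q^{e-r}` on which all the `ψ_i` vanish. -/
theorem stmt17 (Fq : Type) [Field Fq] [Fintype Fq] (d n m e : ℕ) (hd : 2 ≤ d)
    (hchar : d < ringChar Fq) (he : 1 ≤ e)
    (cf : (Fin d → Fin n) → Fq) (hsym : SymmetricCoeffs Fq d n cf)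
    (hns : Nonsingular Fq (formOf Fq d n cf))
    (J l : ℕ) (hl1 : (l : ℝ) ≤ 1 + (J : ℝ) / ((d : ℝ) - 1)) (hl2 : l ≤ e + 1)
    (α : Km Fq m) (hα : absLt α 0) (hmaj : α ∉ majorArcs Fq m d e (J : ℤ)) :
    (∀ x : Fin (d - 1) → Fin n → Polynomial (Amod Fq m),
      (∀ j i, polyDegLt (x j i) (((e + 1 : ℕ) : ℤ) - ((e + 1 - l : ℕ) : ℤ))) →
      (∀ i, fracLt (α * OtoK Fq m (psiForm Fq d n cf (Polynomial (Amod Fq m)) i x))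
        (-((e + 1 : ℕ) : ℤ) - ((d : ℤ) - 1) * ((e + 1 - l : ℕ) : ℤ))) →
      ∀ i, psiForm Fq d n cf (Polynomial (Amod Fq m)) i x = 0) ∧
    Mcount Fq d n m cf α (e + 1) (e + 1 - l) ≤
      Nat.card {x : Fin (d - 1) → Fin n → Polynomial (Amod Fq m) //
        (∀ j i, polyDegLt (x j i) ((e : ℤ) - ((e + 1 - l : ℕ) : ℤ) + 1)) ∧
        ∀ i, psiForm Fq d n cf (Polynomial (Amod Fq m)) i x = 0} :=
  stmt17_general Fq d n m e hd cf J l hl1 hl2 α hα hmaj
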